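/- arXiv:2001.05364 — 8 statements merged into one kernel-verified Lean document; each statement's English description precedes it below -/
import Mathlib

section
/- Let U be a finite set, let F be a nonempty family of subsets of U, and let N be a positive integer. If for each u ∈ U a weight w(u) ∈ {1, 2, …, N} is chosen uniformly and independently at random, then the probability that w isolates F (i.e., that there is a unique set S' ∈ F with w(S') = min_{S ∈ F} w(S)) is at least 1 − |U|/N. -/
/-- A weight function `w : U → ℕ` isolates a set family `F` if there is a unique
`S' ∈ F` whose total weight `w(S') = ∑_{u ∈ S'} w u` attains `min_{S ∈ F} w(S)`. -/
def Isolates {U : Type} [DecidableEq U] (w : U → ℕ) (F : Finset (Finset U)) : Prop :=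
  ∃! S', S' ∈ F ∧ ∀ S ∈ F, ∑ u ∈ S', w u ≤ ∑ u ∈ S, w u

/-- An element `u` is "bad" (ambiguous) for weight `w` and family `F` if there are two
minimizers of `w` in `F`, one containing `u` and one not. -/
def BadFor {U : Type} [DecidableEq U] (w : U → ℕ) (F : Finset (Finset U)) (u : U) : Prop :=
  ∃ S₁ ∈ F, ∃ S₂ ∈ F, u ∈ S₁ ∧ u ∉ S₂ ∧
    (∀ S ∈ F, ∑ v ∈ S₁, w v ≤ ∑ v ∈ S, w v) ∧
    (∀ S ∈ F, ∑ v ∈ S₂, w v ≤ ∑ v ∈ S, w v)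

/-- If `w` does not isolate a nonempty family, then some element is bad. -/
lemma exists_bad {U : Type} [Fintype U] [DecidableEq U] (w : U → ℕ)
    (F : Finset (Finset U)) (hF : F.Nonempty) (h : ¬ Isolates w F) :
    ∃ u, BadFor w F u := by
  classical
  obtain ⟨S₀, hS₀, hmin⟩ := F.exists_min_image (fun S => ∑ v ∈ S, w v) hF
  have h2 : ∃ S', (S' ∈ F ∧ ∀ S ∈ F, ∑ v ∈ S', w v ≤ ∑ v ∈ S, w v) ∧ S' ≠ S₀ := by
    by_contra hc
    push_neg at hc
    exact h ⟨S₀, ⟨hS₀, hmin⟩, fun y hy => hc y hy⟩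
  obtain ⟨S', hp', hne'⟩ := h2
  have hp₀ : S₀ ∈ F ∧ ∀ S ∈ F, ∑ v ∈ S₀, w v ≤ ∑ v ∈ S, w v := ⟨hS₀, hmin⟩
  · have hne'' : S' ≠ S₀ := hne'
    set S₀' := S₀
    have : ∃ u, (u ∈ S₀' ∧ u ∉ S') ∨ (u ∈ S' ∧ u ∉ S₀') := by
      by_contra hc
      push_neg at hc
      apply hne'
      ext v
      exact ⟨fun hv => (hc v).2 hv, fun hv => (hc v).1 hv⟩
    obtain ⟨u, hu⟩ := this
    rcases hu with ⟨h1, h2⟩ | ⟨h1, h2⟩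
    · exact ⟨u, S₀', hp₀.1, S', hp'.1, h1, h2, hp₀.2, hp'.2⟩
    · exact ⟨u, S', hp'.1, S₀', hp₀.1, h1, h2, hp'.2, hp₀.2⟩

/-- If `u` is bad for two weight functions agreeing away from `u`, they agree at `u` too. -/
lemma bad_determined {U : Type} [Fintype U] [DecidableEq U]
    (F : Finset (Finset U)) (u : U) (w w' : U → ℕ)
    (hb : BadFor w F u) (hb' : BadFor w' F u)
    (hagree : ∀ v, v ≠ u → w v = w' v) : w u = w' u := by
  classical
  obtain ⟨S₁, hS₁, S₂, hS₂, hu₁, hu₂, hmin₁, hmin₂⟩ := hb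
  obtain ⟨T₁, hT₁, T₂, hT₂, hv₁, hv₂, hmin₁', hmin₂'⟩ := hb'
  have sum_eq : ∀ S : Finset U, u ∉ S → ∑ v ∈ S, w v = ∑ v ∈ S, w' v := by
    intro S hS
    exact Finset.sum_congr rfl (fun v hv => hagree v (fun h => hS (h ▸ hv)))
  have sum_erase : ∀ S : Finset U, ∑ v ∈ S.erase u, w v = ∑ v ∈ S.erase u, w' v := by
    intro S
    exact sum_eq _ (Finset.notMem_erase u S)
  -- the two minima agree
  have hm1 : ∑ v ∈ S₁, w v = ∑ v ∈ S₂, w v :=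
    le_antisymm (hmin₁ S₂ hS₂) (hmin₂ S₁ hS₁)
  have hm1' : ∑ v ∈ T₁, w' v = ∑ v ∈ T₂, w' v :=
    le_antisymm (hmin₁' T₂ hT₂) (hmin₂' T₁ hT₁)
  have hmm' : ∑ v ∈ S₁, w v = ∑ v ∈ T₁, w' v := by
    apply le_antisymm
    · calc ∑ v ∈ S₁, w v ≤ ∑ v ∈ T₂, w v := hmin₁ T₂ hT₂
        _ = ∑ v ∈ T₂, w' v := sum_eq _ hv₂
        _ = ∑ v ∈ T₁, w' v := hm1'.symm
    · calc ∑ v ∈ T₁, w' v ≤ ∑ v ∈ S₂, w' v := hmin₁' S₂ hS₂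
        _ = ∑ v ∈ S₂, w v := (sum_eq _ hu₂).symm
        _ = ∑ v ∈ S₁, w v := hm1.symm
  -- split off u from S₁ and T₁
  have hsplit : w u + ∑ v ∈ S₁.erase u, w v = ∑ v ∈ S₁, w v :=
    Finset.add_sum_erase _ _ hu₁
  have hsplit' : w' u + ∑ v ∈ T₁.erase u, w' v = ∑ v ∈ T₁, w' v :=
    Finset.add_sum_erase _ _ hv₁
  apply le_antisymm
  · -- w u ≤ w' u, using that T₁ ∋ u and S₁'s min value ≤ weight of T₁ under w
    have h1 : ∑ v ∈ S₁, w v ≤ ∑ v ∈ T₁, w v := hmin₁ T₁ hT₁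
    have h2 : ∑ v ∈ T₁, w v = w u + ∑ v ∈ T₁.erase u, w v :=
      (Finset.add_sum_erase _ _ hv₁).symm
    have h3 : ∑ v ∈ T₁, w' v = w' u + ∑ v ∈ T₁.erase u, w v := by
      rw [← hsplit', sum_erase]
    -- min = ∑_{S₁} w ≤ ∑_{T₁} w = w u + X ; min' = ∑_{T₁} w' = w' u + X ; min = min'
    -- so w' u + X ≤ w u + X, giving w' u ≤ w u.  This proves w' u ≤ w u.
    have h1' : ∑ v ∈ T₁, w' v ≤ ∑ v ∈ S₁, w' v := hmin₁' S₁ hS₁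
    have h2' : ∑ v ∈ S₁, w' v = w' u + ∑ v ∈ S₁.erase u, w' v :=
      (Finset.add_sum_erase _ _ hu₁).symm
    have h3' : ∑ v ∈ S₁, w v = w u + ∑ v ∈ S₁.erase u, w' v := by
      rw [← hsplit, sum_erase]
    have hle : w u + ∑ v ∈ S₁.erase u, w' v ≤ w' u + ∑ v ∈ S₁.erase u, w' v := by
      rw [← h3', ← h2', hmm']
      exact h1'
    exact Nat.le_of_add_le_add_right hle
  · have h1 : ∑ v ∈ S₁, w v ≤ ∑ v ∈ T₁, w v := hmin₁ T₁ hT₁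
    have h2 : ∑ v ∈ T₁, w v = w u + ∑ v ∈ T₁.erase u, w v :=
      (Finset.add_sum_erase _ _ hv₁).symm
    have h3 : ∑ v ∈ T₁, w' v = w' u + ∑ v ∈ T₁.erase u, w v := by
      rw [← hsplit', sum_erase]
    have hle : w' u + ∑ v ∈ T₁.erase u, w v ≤ w u + ∑ v ∈ T₁.erase u, w v := by
      rw [← h3, ← hmm', ← h2]
      exact h1
    exact Nat.le_of_add_le_add_right hle

/-- **Isolation Lemma.** If for each `u ∈ U` a weight `w(u) ∈ {1,…,N}` is chosen uniformly and
independently at random (equivalently, `w` is uniform among all functions `U → {1,…,N}`),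
then the probability that `w` isolates a nonempty family `F ⊆ 2^U` is at least `1 - |U|/N`. -/
theorem isolation_lemma {U : Type} [Fintype U] [DecidableEq U]
    (F : Finset (Finset U)) (hF : F.Nonempty) (N : ℕ) (hN : 0 < N) :
    1 - (Fintype.card U : ℝ) / N ≤
      (Nat.card {w : U → Fin N // Isolates (fun u => (w u : ℕ) + 1) F} : ℝ) /
        (N : ℝ) ^ Fintype.card U := by
  classical
  set n := Fintype.card U with hn
  set W : (U → Fin N) → U → ℕ := fun w u => (w u : ℕ) + 1 with hW
  set good : Finset (U → Fin N) := Finset.univ.filter (fun w => Isolates (W w) F) with hgood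
  set bad : Finset (U → Fin N) := Finset.univ.filter (fun w => ¬ Isolates (W w) F) with hbad
  -- Nat.card of the subtype is good.card
  have hcard_good : Nat.card {w : U → Fin N // Isolates (fun u => (w u : ℕ) + 1) F}
      = good.card := by
    rw [Nat.card_eq_fintype_card, Fintype.card_subtype]
  -- total count
  have htotal : good.card + bad.card = N ^ n := by
    rw [hgood, hbad, Finset.card_filter_add_card_filter_not]
    simp [Fintype.card_fun, hn]
  -- bound on bad card for each u
  have hbad_u : ∀ u : U,
      (Finset.univ.filter (fun w : U → Fin N => BadFor (W w) F u)).card ≤ N ^ (n - 1) := by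
    intro u
    have hinj : Set.InjOn (fun (w : U → Fin N) (v : {v : U // v ≠ u}) => w v)
        ↑(Finset.univ.filter (fun w : U → Fin N => BadFor (W w) F u)) := by
      intro w hw w' hw' heq
      simp only [Finset.coe_filter, Set.mem_setOf_eq] at hw hw'
      have hagree : ∀ v, v ≠ u → W w v = W w' v := by
        intro v hv
        have h : w v = w' v := congrFun heq ⟨v, hv⟩
        show (w v : ℕ) + 1 = (w' v : ℕ) + 1
        rw [h]
      have hdet := bad_determined F u (W w) (W w') hw.2 hw'.2 hagree
      have hdet' : (w u : ℕ) + 1 = (w' u : ℕ) + 1 := hdet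
      funext v
      by_cases hv : v = u
      · have hval : (w v : ℕ) = (w' v : ℕ) := by
          rw [hv]; exact Nat.add_right_cancel hdet'
        exact Fin.val_injective hval
      · exact congrFun heq ⟨v, hv⟩
    have := Finset.card_le_card_of_injOn
      (fun (w : U → Fin N) (v : {v : U // v ≠ u}) => w v)
      (fun w _ => Finset.mem_univ _) hinj
    calc (Finset.univ.filter (fun w : U → Fin N => BadFor (W w) F u)).card
        ≤ (Finset.univ : Finset ({v : U // v ≠ u} → Fin N)).card := this
      _ = N ^ (n - 1) := by
          rw [Finset.card_univ, Fintype.card_fun, Fintype.card_fin]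
          congr 1
          rw [Fintype.card_subtype_compl, Fintype.card_subtype_eq]
  -- bad is covered by the bad-for sets
  have hcover : bad ⊆ Finset.univ.biUnion
      (fun u => Finset.univ.filter (fun w : U → Fin N => BadFor (W w) F u)) := by
    intro w hw
    rw [hbad, Finset.mem_filter] at hw
    obtain ⟨u, hu⟩ := exists_bad (W w) F hF hw.2
    exact Finset.mem_biUnion.2 ⟨u, Finset.mem_univ u, Finset.mem_filter.2 ⟨Finset.mem_univ _, hu⟩⟩
  have hbad_card : bad.card ≤ n * N ^ (n - 1) := by
    calc bad.card ≤ (Finset.univ.biUnion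
        (fun u => Finset.univ.filter (fun w : U → Fin N => BadFor (W w) F u))).card :=
          Finset.card_le_card hcover
      _ ≤ ∑ u : U, (Finset.univ.filter (fun w : U → Fin N => BadFor (W w) F u)).card :=
          Finset.card_biUnion_le
      _ ≤ ∑ _u : U, N ^ (n - 1) := Finset.sum_le_sum (fun u _ => hbad_u u)
      _ = n * N ^ (n - 1) := by simp [hn, mul_comm]
  -- key numeric bound in ℕ : bad.card * N ≤ n * N ^ n
  have hkey : bad.card * N ≤ n * N ^ n := by
    calc bad.card * N ≤ n * N ^ (n - 1) * N := Nat.mul_le_mul_right N hbad_card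
      _ = n * N ^ n := by
          cases n with
          | zero => simp
          | succ m => rw [Nat.succ_sub_one, mul_assoc, ← pow_succ]
  -- now pass to ℝ
  have hNpos : (0 : ℝ) < (N : ℝ) ^ n := by positivity
  have hNR : (0 : ℝ) < (N : ℝ) := by exact_mod_cast hN
  have hgoodR : (good.card : ℝ) = (N : ℝ) ^ n - bad.card := by
    have : (good.card : ℝ) + bad.card = (N : ℝ) ^ n := by exact_mod_cast htotal
    linarith
  rw [hcard_good, hgoodR, le_div_iff₀ hNpos, sub_mul, one_mul]
  have hb : (bad.card : ℝ) ≤ (n : ℝ) / N * (N : ℝ) ^ n := by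
    rw [div_mul_eq_mul_div, le_div_iff₀ hNR]
    exact_mod_cast hkey
  linarith
end

section
/- Let U be a finite nonempty set and let F be a nonempty family of subsets of U. If for each u ∈ U a weight w(u) ∈ {1, 2, …, 2|U|} is chosen uniformly and independently at random, then with probability at least 1/2 there exists an integer w₀ such that exactly one set X ∈ F satisfies w(X) = w₀. -/
/-!
This is the isolation lemma of Mulmuley, Vazirani and Vazirani. Call `u` singular for `w` if some
minimum-weight member of `F` contains `u` and another one avoids it; if no element is singular,
the minimum-weight member is unique. Once the weights off `u` are fixed, the least weight of a
member avoiding `u` is a constant `a` and the least weight of a member containing `u` is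
`w u + b` for a constant `b`; `u` is singular only if `w u + b = a`, which pins down `w u`.
Hence `u` is singular with probability at most `1/N` for `N` possible weights, and by the union
bound some element is singular with probability at most `|U|/N = 1/2`.
-/

open Finset

section IsolationLemma

variable {U M : Type*} [AddCommMonoid M] [LinearOrder M]
  {F : Finset (Finset U)} {w : U → M} {X Y : Finset U}

def IsMinWeight (F : Finset (Finset U)) (w : U → M) (X : Finset U) : Prop :=
  X ∈ F ∧ ∀ Y ∈ F, ∑ u ∈ X, w u ≤ ∑ u ∈ Y, w u

def IsSingular (F : Finset (Finset U)) (w : U → M) (u : U) : Prop :=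
  ∃ X Y, IsMinWeight F w X ∧ IsMinWeight F w Y ∧ u ∈ X ∧ u ∉ Y

theorem IsMinWeight.sum_eq (hX : IsMinWeight F w X) (hY : IsMinWeight F w Y) :
    ∑ u ∈ X, w u = ∑ u ∈ Y, w u :=
  le_antisymm (hX.2 Y hY.1) (hY.2 X hX.1)

theorem IsMinWeight.sum_erase_le [IsOrderedCancelAddMonoid M] [DecidableEq U] {u : U}
    (hX : IsMinWeight F w X) (hY : Y ∈ F) (huX : u ∈ X) (huY : u ∈ Y) :
    ∑ v ∈ X.erase u, w v ≤ ∑ v ∈ Y.erase u, w v := by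
  have h := hX.2 Y hY
  rw [← add_sum_erase X w huX, ← add_sum_erase Y w huY] at h
  exact le_of_add_le_add_left h

theorem exists_isSingular_of_ne (hX : IsMinWeight F w X) (hY : IsMinWeight F w Y)
    (hne : X ≠ Y) : ∃ u, IsSingular F w u := by
  obtain ⟨u, hu⟩ : ∃ u, ¬(u ∈ X ↔ u ∈ Y) := by
    by_contra! h
    exact hne (ext h)
  by_cases huX : u ∈ X
  · exact ⟨u, X, Y, hX, hY, huX, fun huY => hu ⟨fun _ => huY, fun _ => huX⟩⟩
  · exact ⟨u, Y, X, hY, hX, by tauto, huX⟩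

theorem exists_existsUnique_sum_eq_of_forall_not_isSingular (hF : F.Nonempty)
    (h : ∀ u, ¬IsSingular F w u) : ∃ w₀, ∃! X, X ∈ F ∧ ∑ u ∈ X, w u = w₀ := by
  obtain ⟨X, hXF, hXmin⟩ := exists_min_image F (fun X => ∑ u ∈ X, w u) hF
  refine ⟨∑ u ∈ X, w u, X, ⟨hXF, rfl⟩, fun Y ⟨hYF, hYX⟩ => ?_⟩
  by_contra hne
  have hY : IsMinWeight F w Y := ⟨hYF, fun Z hZ => hYX ▸ hXmin Z hZ⟩
  obtain ⟨u, hu⟩ := exists_isSingular_of_ne hY ⟨hXF, hXmin⟩ hne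
  exact h u hu

theorem IsSingular.apply_eq_of_forall_ne [IsOrderedCancelAddMonoid M] {w₁ w₂ : U → M} {u : U}
    (h₁ : IsSingular F w₁ u) (h₂ : IsSingular F w₂ u) (hoff : ∀ v, v ≠ u → w₁ v = w₂ v) :
    w₁ u = w₂ u := by
  classical
  obtain ⟨X₁, Y₁, hX₁, hY₁, huX₁, huY₁⟩ := h₁
  obtain ⟨X₂, Y₂, hX₂, hY₂, huX₂, huY₂⟩ := h₂
  have hagree : ∀ Z : Finset U, u ∉ Z → ∑ v ∈ Z, w₁ v = ∑ v ∈ Z, w₂ v := fun Z hZ =>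
    sum_congr rfl fun v hv => hoff v (ne_of_mem_of_not_mem hv hZ)
  have hmin : ∑ v ∈ Y₁, w₁ v = ∑ v ∈ Y₂, w₂ v :=
    le_antisymm ((hY₁.2 Y₂ hY₂.1).trans_eq (hagree Y₂ huY₂))
      ((hY₂.2 Y₁ hY₁.1).trans_eq (hagree Y₁ huY₁).symm)
  have hrest : ∑ v ∈ X₁.erase u, w₁ v = ∑ v ∈ X₂.erase u, w₂ v :=
    le_antisymm
      ((hX₁.sum_erase_le hX₂.1 huX₁ huX₂).trans_eq (hagree _ (notMem_erase u X₂)))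
      ((hX₂.sum_erase_le hX₁.1 huX₂ huX₁).trans_eq (hagree _ (notMem_erase u X₁)).symm)
  have hsum : w₁ u + ∑ v ∈ X₁.erase u, w₁ v = w₂ u + ∑ v ∈ X₂.erase u, w₂ v := by
    rw [add_sum_erase X₁ w₁ huX₁, add_sum_erase X₂ w₂ huX₂, hX₁.sum_eq hY₁, hX₂.sum_eq hY₂, hmin]
  rw [hrest] at hsum
  exact add_right_cancel hsum

end IsolationLemma

theorem card_mul_card_le_card_fun_of_forall_ne_eq {α β : Type*} [Fintype α] [DecidableEq α]
    [Fintype β] (s : Finset (α → β)) (a : α)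
    (hs : ∀ f ∈ s, ∀ g ∈ s, (∀ x, x ≠ a → f x = g x) → f = g) :
    #s * Fintype.card β ≤ Fintype.card β ^ Fintype.card α := by
  have hinj : Set.InjOn (fun p : (α → β) × β => Function.update p.1 a p.2)
      (s ×ˢ (univ : Finset β) : Finset _) := by
    rintro ⟨f, b⟩ hf ⟨g, c⟩ hg hfg
    simp only [coe_product, coe_univ, Set.mem_prod, mem_coe, Set.mem_univ, and_true] at hf hg
    have hbc : b = c := by simpa using congrFun hfg a
    refine Prod.ext (hs f hf g hg fun x hx => ?_) hbc
    simpa [Function.update_of_ne hx] using congrFun hfg x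
  have := card_le_card_of_injOn _ (fun _ _ => mem_coe.2 (mem_univ _)) hinj
  simpa [card_product, Fintype.card_fun] using this

section Counting

variable {U β M : Type*} [Fintype U] [DecidableEq U] [Fintype β]
  [AddCommMonoid M] [LinearOrder M] [IsOrderedCancelAddMonoid M]

open scoped Classical in
theorem card_filter_exists_isSingular_mul_le (F : Finset (Finset U)) {e : β → M}
    (he : Function.Injective e) :
    #{w : U → β | ∃ u, IsSingular F (e ∘ w) u} * Fintype.card β ≤
      Fintype.card U * Fintype.card β ^ Fintype.card U := by
  have hsingular (u : U) :
      #{w : U → β | IsSingular F (e ∘ w) u} * Fintype.card β ≤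
        Fintype.card β ^ Fintype.card U := by
    refine card_mul_card_le_card_fun_of_forall_ne_eq _ u fun f hf g hg hfg => funext fun x => ?_
    rw [mem_filter] at hf hg
    by_cases hx : x = u
    · subst hx
      exact he (hf.2.apply_eq_of_forall_ne hg.2 fun v hv => congrArg e (hfg v hv))
    · exact hfg x hx
  have hunion : #{w : U → β | ∃ u, IsSingular F (e ∘ w) u} ≤
      ∑ u, #{w : U → β | IsSingular F (e ∘ w) u} := by
    refine (card_le_card fun w hw => ?_).trans card_biUnion_le
    obtain ⟨u, hu⟩ := (mem_filter.1 hw).2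
    exact mem_biUnion.2 ⟨u, mem_univ u, mem_filter.2 ⟨mem_univ w, hu⟩⟩
  calc #{w : U → β | ∃ u, IsSingular F (e ∘ w) u} * Fintype.card β
      ≤ ∑ u, #{w : U → β | IsSingular F (e ∘ w) u} * Fintype.card β := by
        rw [← sum_mul]; exact Nat.mul_le_mul_right _ hunion
    _ ≤ ∑ _u : U, Fintype.card β ^ Fintype.card U := sum_le_sum fun u _ => hsingular u
    _ = Fintype.card U * Fintype.card β ^ Fintype.card U := by simp

open scoped Classical in
theorem sub_mul_le_card_filter_existsUnique_mul {F : Finset (Finset U)} (hF : F.Nonempty)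
    {e : β → M} (he : Function.Injective e) :
    (Fintype.card β - Fintype.card U) * Fintype.card β ^ Fintype.card U ≤
      #{w : U → β | ∃ w₀, ∃! X, X ∈ F ∧ ∑ u ∈ X, e (w u) = w₀} * Fintype.card β := by
  set good := #{w : U → β | ∃ w₀, ∃! X, X ∈ F ∧ ∑ u ∈ X, e (w u) = w₀}
  set bad := #{w : U → β | ∃ u, IsSingular F (e ∘ w) u}
  have hcover : Fintype.card β ^ Fintype.card U ≤ good + bad := by
    rw [← Fintype.card_fun, ← card_univ]
    refine (card_le_card fun w _ => ?_).trans (card_union_le _ _)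
    by_cases hw : ∃ u, IsSingular F (e ∘ w) u
    · exact mem_union_right _ (mem_filter.2 ⟨mem_univ w, hw⟩)
    · exact mem_union_left _ (mem_filter.2 ⟨mem_univ w,
        exists_existsUnique_sum_eq_of_forall_not_isSingular hF (not_exists.1 hw)⟩)
  have hbad := card_filter_exists_isSingular_mul_le F he
  have hcover' := Nat.mul_le_mul_right (Fintype.card β) hcover
  rw [Nat.sub_mul, tsub_le_iff_right]
  linarith

end Counting

theorem exists_unique_weight_with_prob_half_general {U : Type} [Fintype U] [Nonempty U]
    (F : Finset (Finset U)) (hF : F.Nonempty) :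
    (1 : ℝ) / 2 ≤
      (Nat.card {w : U → Fin (2 * Fintype.card U) //
          ∃ w₀ : ℕ, ∃! X, X ∈ F ∧ ∑ u ∈ X, ((w u : ℕ) + 1) = w₀} : ℝ) /
        ((2 * Fintype.card U : ℕ) : ℝ) ^ Fintype.card U := by
  classical
  have hn : 0 < Fintype.card U := Fintype.card_pos
  have hcount := sub_mul_le_card_filter_existsUnique_mul (β := Fin (2 * Fintype.card U)) hF
    (e := fun i => (i : ℕ) + 1) fun i j hij => Fin.ext (Nat.add_right_cancel hij)
  rw [Fintype.card_fin, two_mul, Nat.add_sub_cancel, ← two_mul] at hcount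
  rw [Nat.card_eq_fintype_card, Fintype.card_subtype, div_le_div_iff₀ two_pos (by positivity)]
  have hn' : (0 : ℝ) < Fintype.card U := by exact_mod_cast hn
  have hcount' := (Nat.cast_le (α := ℝ)).2 hcount
  push_cast at hcount' ⊢
  nlinarith

/-- If `U` is a finite nonempty set, `F` is a nonempty family of subsets of `U`, and for each
`u ∈ U` a weight `w(u) ∈ {1,…,2|U|}` is chosen uniformly and independently at random
(equivalently, `w` is uniform among all functions `U → {1,…,2|U|}`), then with probability at
least `1/2` there is a weight `w₀` such that exactly one `X ∈ F` satisfies `w(X) = w₀`. -/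
theorem exists_unique_weight_with_prob_half {U : Type} [Fintype U] [DecidableEq U] [Nonempty U]
    (F : Finset (Finset U)) (hF : F.Nonempty) :
    (1 : ℝ) / 2 ≤
      (Nat.card {w : U → Fin (2 * Fintype.card U) //
          ∃ w₀ : ℕ, ∃! X, X ∈ F ∧ ∑ u ∈ X, ((w u : ℕ) + 1) = w₀} : ℝ) /
        ((2 * Fintype.card U : ℕ) : ℝ) ^ Fintype.card U :=
  exists_unique_weight_with_prob_half_general F hF
end

section
/- Let G = (V, E) be a finite simple undirected graph and let X ⊆ V be a subset of vertices with v₁ ∈ X. The number of pairs (X_L, X_R) such that (X_L, X_R) is a consistent cut of G[X] and v₁ ∈ X_L is exactly 2^{cc(G[X]) − 1}, where cc(G[X]) denotes the number of connected components of the subgraph of G induced by X. -/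
/-- `(XL, XR)` is a consistent cut of the subgraph of `G` induced by `X`:
it partitions `X` and no edge of `G` joins a vertex of `XL` to a vertex of `XR`. -/
def ConsCut {V : Type} [DecidableEq V] (G : SimpleGraph V) (X XL XR : Finset V) : Prop :=
  XL ∪ XR = X ∧ Disjoint XL XR ∧ ∀ u ∈ XL, ∀ v ∈ XR, ¬ G.Adj u v

lemma ConsCut.side_const {V : Type} [DecidableEq V] {G : SimpleGraph V}
    {X XL XR : Finset V} (h : ConsCut G X XL XR)
    {a b : ↥(X : Set V)} (hr : (G.induce (X : Set V)).Reachable a b) :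
    (a : V) ∈ XL ↔ (b : V) ∈ XL := by
  obtain ⟨w⟩ := hr
  induction w with
  | nil => rfl
  | @cons u c b hadj p ih =>
    refine Iff.trans ?_ ih
    have hadj' : G.Adj (u : V) (c : V) := hadj
    have hcX : (c : V) ∈ X := c.2
    have huX : (u : V) ∈ X := u.2
    constructor
    · intro hu
      by_contra hc
      have : (c : V) ∈ XR := by
        have hm : (c : V) ∈ XL ∪ XR := by rw [h.1]; exact hcX
        rcases Finset.mem_union.mp hm with h1 | h1
        · exact absurd h1 hc
        · exact h1
      exact h.2.2 _ hu _ this hadj'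
    · intro hc
      by_contra hu
      have : (u : V) ∈ XR := by
        have hm : (u : V) ∈ XL ∪ XR := by rw [h.1]; exact huX
        rcases Finset.mem_union.mp hm with h1 | h1
        · exact absurd h1 hu
        · exact h1
      exact h.2.2 _ hc _ this hadj'.symm

/-- For `v₁ ∈ X ⊆ V`, the number of consistent cuts `(X_L, X_R)` of `G[X]` with `v₁ ∈ X_L`
equals `2 ^ (cc(G[X]) - 1)`. -/
theorem card_consistent_cuts {V : Type} [Fintype V] [DecidableEq V] (G : SimpleGraph V)
    (X : Finset V) (v₁ : V) (hv₁ : v₁ ∈ X) :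
    Set.ncard {p : Finset V × Finset V | ConsCut G X p.1 p.2 ∧ v₁ ∈ p.1} =
      2 ^ (Nat.card (G.induce (X : Set V)).ConnectedComponent - 1) := by
  classical
  set H := G.induce (X : Set V) with hH
  set c₀ : H.ConnectedComponent := H.connectedComponentMk ⟨v₁, hv₁⟩ with hc₀
  -- key fact: the representative of the component of v is on the same side as v
  have fact1 : ∀ (XL XR : Finset V), ConsCut G X XL XR → ∀ (v : V) (hv : v ∈ X),
      ((Quot.out (H.connectedComponentMk ⟨v, hv⟩) : ↥(X : Set V)) : V) ∈ XL ↔ v ∈ XL := by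
    intro XL XR hcut v hv
    have hr : H.Reachable (Quot.out (H.connectedComponentMk ⟨v, hv⟩)) ⟨v, hv⟩ :=
      SimpleGraph.ConnectedComponent.exact (Quot.out_eq _)
    exact hcut.side_const hr
  have subL : ∀ (XL XR : Finset V), ConsCut G X XL XR → ∀ v ∈ XL, v ∈ X := by
    intro XL XR hcut v hvL
    exact hcut.1 ▸ Finset.mem_union.mpr (Or.inl hvL)
  -- the equivalence
  have key : {p : Finset V × Finset V // ConsCut G X p.1 p.2 ∧ v₁ ∈ p.1} ≃
      {S : Set H.ConnectedComponent // c₀ ∈ S} := by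
    refine Equiv.mk
      (fun p => ⟨{c | ((Quot.out c : ↥(X : Set V)) : V) ∈ p.1.1}, ?_⟩)
      (fun S => ⟨(X.filter (fun v => ∃ h : v ∈ X, H.connectedComponentMk ⟨v, h⟩ ∈ S.1),
                  X.filter (fun v => ∀ h : v ∈ X, H.connectedComponentMk ⟨v, h⟩ ∉ S.1)),
                 ⟨?_, ?_, ?_⟩, ?_⟩)
      ?_ ?_
    · -- c₀ lands on the left
      exact (fact1 _ _ p.2.1 v₁ hv₁).mpr p.2.2
    · -- union = X
      ext v
      simp only [Finset.mem_union, Finset.mem_filter]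
      constructor
      · rintro (⟨h, _⟩ | ⟨h, _⟩) <;> exact h
      · intro hv
        by_cases hS : H.connectedComponentMk ⟨v, hv⟩ ∈ S.1
        · exact Or.inl ⟨hv, hv, hS⟩
        · exact Or.inr ⟨hv, fun h => hS⟩
    · -- disjoint
      rw [Finset.disjoint_left]
      intro v hvL hvR
      obtain ⟨hv, h, hS⟩ := Finset.mem_filter.mp hvL
      exact (Finset.mem_filter.mp hvR).2 h hS
    · -- no edges across
      intro u hu w hw hadj
      obtain ⟨huX, hu', huS⟩ := Finset.mem_filter.mp hu
      obtain ⟨hwX, hw'⟩ := Finset.mem_filter.mp hw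
      have hadjH : H.Adj ⟨u, huX⟩ ⟨w, hwX⟩ := hadj
      have : H.connectedComponentMk ⟨u, huX⟩ = H.connectedComponentMk ⟨w, hwX⟩ :=
        SimpleGraph.ConnectedComponent.connectedComponentMk_eq_of_adj hadjH
      exact hw' hwX (this ▸ huS)
    · -- v₁ on the left
      exact Finset.mem_filter.mpr ⟨hv₁, hv₁, S.2⟩
    · -- left inverse
      rintro ⟨⟨XL, XR⟩, hcut, hv⟩
      ext v
      · -- first component
        simp only [Finset.mem_filter, Set.mem_setOf_eq]
        constructor
        · rintro ⟨hvX, h, hout⟩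
          exact (fact1 XL XR hcut v h).mp hout
        · intro hvL
          have hvX := subL XL XR hcut v hvL
          exact ⟨hvX, hvX, (fact1 XL XR hcut v hvX).mpr hvL⟩
      · -- second component
        simp only [Finset.mem_filter, Set.mem_setOf_eq]
        constructor
        · rintro ⟨hvX, h⟩
          have hvnL : v ∉ XL := fun hvL => h hvX ((fact1 XL XR hcut v hvX).mpr hvL)
          rcases Finset.mem_union.mp (hcut.1.symm ▸ hvX) with h1 | h1
          · exact absurd h1 hvnL
          · exact h1
        · intro hvR
          have hvX : v ∈ X := hcut.1 ▸ Finset.mem_union.mpr (Or.inr hvR)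
          refine ⟨hvX, fun h hout => ?_⟩
          have hvL : v ∈ XL := (fact1 XL XR hcut v h).mp hout
          exact Finset.disjoint_left.mp hcut.2.1 hvL hvR
    · -- right inverse
      rintro ⟨S, hS⟩
      ext c
      simp only [Set.mem_setOf_eq, Finset.mem_filter]
      constructor
      · rintro ⟨_, h, hmem⟩
        have : H.connectedComponentMk ⟨((Quot.out c : ↥(X : Set V)) : V), h⟩ = c := by
          have : (⟨((Quot.out c : ↥(X : Set V)) : V), h⟩ : ↥(X : Set V)) = Quot.out c :=
            Subtype.ext rfl
          rw [this]
          exact Quot.out_eq c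
        exact this ▸ hmem
      · intro hc
        refine ⟨(Quot.out c).2, (Quot.out c).2, ?_⟩
        have : H.connectedComponentMk (Quot.out c) = c := Quot.out_eq c
        have h2 : (⟨((Quot.out c : ↥(X : Set V)) : V), (Quot.out c).2⟩ : ↥(X : Set V)) =
            Quot.out c := Subtype.ext rfl
        rw [h2, this]
        exact hc
  -- now count
  rw [← Nat.card_coe_set_eq]
  have : Nat.card {p : Finset V × Finset V | ConsCut G X p.1 p.2 ∧ v₁ ∈ p.1} =
      Nat.card {S : Set H.ConnectedComponent // c₀ ∈ S} := Nat.card_congr key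
  rw [this]
  -- {S // c₀ ∈ S} ≃ Set {c // c ≠ c₀}
  have e2 : {S : Set H.ConnectedComponent // c₀ ∈ S} ≃ Set {c : H.ConnectedComponent // c ≠ c₀} := by
    refine Equiv.mk
      (fun S => {c | c.1 ∈ S.1})
      (fun T => ⟨{c | c = c₀ ∨ ∃ h : c ≠ c₀, (⟨c, h⟩ : {c // c ≠ c₀}) ∈ T}, Or.inl rfl⟩)
      ?_ ?_
    · rintro ⟨S, hS⟩
      ext c
      simp only [Set.mem_setOf_eq]
      constructor
      · rintro (rfl | ⟨h, hc⟩)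
        · exact hS
        · exact hc
      · intro hc
        by_cases h : c = c₀
        · exact Or.inl h
        · exact Or.inr ⟨h, hc⟩
    · intro T
      ext ⟨c, hc⟩
      simp only [Set.mem_setOf_eq]
      constructor
      · rintro (rfl | ⟨h, hm⟩)
        · exact absurd rfl hc
        · exact hm
      · intro hm
        exact Or.inr ⟨hc, hm⟩
  rw [Nat.card_congr e2]
  haveI : Finite H.ConnectedComponent := Quot.finite _
  haveI : Fintype H.ConnectedComponent := Fintype.ofFinite _
  rw [Nat.card_eq_fintype_card, Fintype.card_set]
  congr 1
  rw [Nat.card_eq_fintype_card]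
  have : Fintype.card {c : H.ConnectedComponent // c ≠ c₀} =
      Fintype.card H.ConnectedComponent - 1 := by
    rw [Fintype.card_subtype_compl, Fintype.card_subtype_eq]
  exact this
end

section
/- Let G = (V, E) be a finite simple undirected graph, let k be a natural number, let v₁ ∈ V, and let w : V → ℕ be a weight function. For every w₀ ∈ ℕ, the number of triples (X, X_L, X_R) such that X is a vertex cover of G with |X| = k and w(X) = w₀, (X_L, X_R) is a consistent cut of G[X], and v₁ ∈ X_L, is congruent modulo 2 to the number of sets X such that X is a vertex cover of G with |X| = k, w(X) = w₀, v₁ ∈ X, and G[X] is connected. -/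
def Set.containingEquivSetNe {α : Type*} (a : α) : {C : Set α // a ∈ C} ≃ Set {c // c ≠ a} where
  toFun C := Subtype.val ⁻¹' C.1
  invFun D := ⟨insert a (Subtype.val '' D), Set.mem_insert a _⟩
  left_inv := by
    rintro ⟨C, hC⟩
    ext c
    by_cases h : c = a <;> simp [h, hC]
  right_inv D := by
    ext ⟨c, hc⟩
    simp [hc]

theorem Set.ncard_setOf_mem {α : Type*} [Finite α] (a : α) :
    {C : Set α | a ∈ C}.ncard = 2 ^ (Nat.card α - 1) := by
  classical
  have := Fintype.ofFinite α
  rw [← Nat.card_coe_set_eq]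
  refine (Nat.card_congr (Set.containingEquivSetNe a)).trans ?_
  rw [Nat.card_eq_fintype_card, Fintype.card_set, Fintype.card_subtype_compl,
    Fintype.card_subtype_eq, Nat.card_eq_fintype_card]

theorem Nat.two_pow_pred_modEq (n : ℕ) : 2 ^ (n - 1) ≡ if n ≤ 1 then 1 else 0 [MOD 2] := by
  rcases Nat.lt_or_ge n 2 with h | h
  · rw [if_pos (by omega), Nat.sub_eq_zero_of_le (by omega), pow_zero]
  · obtain ⟨m, rfl⟩ := Nat.exists_eq_add_of_le h
    rw [if_neg (by omega), show 2 + m - 1 = m + 1 by omega, pow_succ]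
    exact Nat.modEq_zero_iff_dvd.2 (dvd_mul_left 2 _)

theorem SimpleGraph.preconnected_iff_subsingleton_connectedComponent {V : Type*}
    {G : SimpleGraph V} : G.Preconnected ↔ Subsingleton G.ConnectedComponent :=
  ⟨Preconnected.subsingleton_connectedComponent,
    fun _ _ _ => ConnectedComponent.exact (Subsingleton.elim _ _)⟩

theorem Set.ncard_setOf_prod_eq_sum {α β : Type*} [Fintype α] [Finite β] (P : α → Prop)
    [DecidablePred P] (Q : α → β → Prop) :
    {t : α × β | P t.1 ∧ Q t.1 t.2}.ncard = ∑ a with P a, {b | Q a b}.ncard := by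
  rw [← Nat.card_coe_set_eq]
  refine (Nat.card_congr (Equiv.subtypeProdEquivSigmaSubtype fun a b => P a ∧ Q a b)).trans ?_
  rw [Nat.card_sigma, Finset.sum_filter]
  refine Finset.sum_congr rfl fun a _ => ?_
  split_ifs with ha
  · simp only [ha, true_and]; rfl
  · simp [ha]

theorem Set.ncard_setOf_and_eq_sum_ite {α : Type*} [Fintype α] (P R : α → Prop)
    [DecidablePred P] [DecidablePred R] :
    {a | P a ∧ R a}.ncard = ∑ a with P a, if R a then 1 else 0 := by
  rw [Finset.sum_boole, Finset.filter_filter, ← Set.ncard_coe_finset]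
  simp

open SimpleGraph

namespace ConsCut

variable {V : Type} [DecidableEq V] {G : SimpleGraph V} {X XL XR : Finset V}

theorem left_subset (h : ConsCut G X XL XR) : XL ⊆ X :=
  h.1 ▸ Finset.subset_union_left

theorem right_eq_sdiff (h : ConsCut G X XL XR) : XR = X \ XL := by
  rw [← h.1, Finset.union_sdiff_cancel_left h.2.1]

theorem mem_left_of_reachable (h : ConsCut G X XL XR) {a b : (X : Set V)}
    (hab : (G.induce (X : Set V)).Reachable a b) (ha : ↑a ∈ XL) : ↑b ∈ XL := by
  obtain ⟨p⟩ := hab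
  induction p with
  | nil => exact ha
  | @cons a c b hac _ ih =>
    refine ih ?_
    have hc : (c : V) ∈ XL ∪ XR := h.1 ▸ c.2
    exact (Finset.mem_union.1 hc).resolve_right (h.2.2 _ ha _ · hac)

end ConsCut

section cutOfComponents

variable {V : Type} [DecidableEq V] (G : SimpleGraph V) (X : Finset V)

open Classical in
noncomputable def cutOfComponents (C : Set (G.induce (X : Set V)).ConnectedComponent) :
    Finset V × Finset V :=
  let L := X.filter fun x => ∃ hx : x ∈ X, (G.induce (X : Set V)).connectedComponentMk ⟨x, hx⟩ ∈ C
  (L, X \ L)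

variable {G X} {C : Set (G.induce (X : Set V)).ConnectedComponent}

theorem cutOfComponents_fst_subset : (cutOfComponents G X C).1 ⊆ X := by
  classical exact Finset.filter_subset _ _

theorem mem_cutOfComponents_fst {x : V} (hx : x ∈ X) :
    x ∈ (cutOfComponents G X C).1 ↔ (G.induce (X : Set V)).connectedComponentMk ⟨x, hx⟩ ∈ C := by
  simp [cutOfComponents, hx]

theorem consCut_cutOfComponents :
    ConsCut G X (cutOfComponents G X C).1 (cutOfComponents G X C).2 := by
  refine ⟨Finset.union_sdiff_of_subset cutOfComponents_fst_subset, Finset.disjoint_sdiff,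
    fun u hu v hv huv => ?_⟩
  obtain ⟨hvX, hvL⟩ := Finset.mem_sdiff.1 hv
  have huX : u ∈ X := cutOfComponents_fst_subset hu
  have hadj : (G.induce (X : Set V)).Adj ⟨u, huX⟩ ⟨v, hvX⟩ := huv
  rw [mem_cutOfComponents_fst huX, ConnectedComponent.sound hadj.reachable,
    ← mem_cutOfComponents_fst hvX] at hu
  exact hvL hu

theorem cutOfComponents_injective : Function.Injective (cutOfComponents G X) := by
  intro C C' h
  ext c
  induction c using ConnectedComponent.ind with
  | h x => rw [← mem_cutOfComponents_fst x.2, ← mem_cutOfComponents_fst x.2, h]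

theorem ConsCut.eq_cutOfComponents {XL XR : Finset V} (h : ConsCut G X XL XR) :
    cutOfComponents G X ((G.induce (X : Set V)).connectedComponentMk '' {x | ↑x ∈ XL}) =
      (XL, XR) := by
  set C := (G.induce (X : Set V)).connectedComponentMk '' {x | ↑x ∈ XL}
  have hL : (cutOfComponents G X C).1 = XL := by
    ext x
    by_cases hx : x ∈ X
    · rw [mem_cutOfComponents_fst hx]
      constructor
      · rintro ⟨y, hy, hyx⟩
        exact h.mem_left_of_reachable (ConnectedComponent.exact hyx) hy
      · exact fun hxL => ⟨⟨x, hx⟩, hxL, rfl⟩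
    · exact iff_of_false (fun hx' => hx (cutOfComponents_fst_subset hx'))
        (fun hxL => hx (h.left_subset hxL))
  exact Prod.ext hL (by rw [h.right_eq_sdiff, ← hL]; rfl)

end cutOfComponents

theorem ncard_consCut_eq {V : Type} [DecidableEq V] (G : SimpleGraph V) {X : Finset V} {v : V}
    (hv : v ∈ X) :
    {p : Finset V × Finset V | ConsCut G X p.1 p.2 ∧ v ∈ p.1}.ncard =
      2 ^ (Nat.card (G.induce (X : Set V)).ConnectedComponent - 1) := by
  have himage : {p : Finset V × Finset V | ConsCut G X p.1 p.2 ∧ v ∈ p.1} =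
      cutOfComponents G X '' {C | (G.induce (X : Set V)).connectedComponentMk ⟨v, hv⟩ ∈ C} := by
    ext p
    constructor
    · rintro ⟨hcut, hvL⟩
      refine ⟨_, ?_, hcut.eq_cutOfComponents⟩
      exact ⟨⟨v, hv⟩, hvL, rfl⟩
    · rintro ⟨C, hC, rfl⟩
      exact ⟨consCut_cutOfComponents, (mem_cutOfComponents_fst hv).2 hC⟩
  rw [himage, Set.ncard_image_of_injective _ cutOfComponents_injective, Set.ncard_setOf_mem]

theorem ncard_consCut_modEq {V : Type} [DecidableEq V] (G : SimpleGraph V) (X : Finset V)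
    (v : V) [Decidable (G.induce (X : Set V)).Connected] :
    {p : Finset V × Finset V | ConsCut G X p.1 p.2 ∧ v ∈ p.1}.ncard ≡
      if v ∈ X ∧ (G.induce (X : Set V)).Connected then 1 else 0 [MOD 2] := by
  by_cases hv : v ∈ X
  · have hne : Nonempty (X : Set V) := ⟨⟨v, hv⟩⟩
    simp only [hv, true_and, connected_iff, hne, and_true,
      preconnected_iff_subsingleton_connectedComponent,
      ← Finite.card_le_one_iff_subsingleton, ncard_consCut_eq G hv]
    exact Nat.two_pow_pred_modEq _
  · have hempty : {p : Finset V × Finset V | ConsCut G X p.1 p.2 ∧ v ∈ p.1} = ∅ :=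
      Set.eq_empty_of_forall_notMem fun p hp => hv (hp.1.left_subset hp.2)
    simp [hempty, hv, Nat.ModEq.refl]

/-- Cut&Count correctness for **Connected Vertex Cover**: for every target weight `w₀`, the
number of triples `(X, X_L, X_R)` where `X` is a vertex cover of `G` of size `k` and weight
`w₀`, `(X_L, X_R)` is a consistent cut of `G[X]` and `v₁ ∈ X_L`, is congruent modulo 2 to the
number of vertex covers `X` of size `k` and weight `w₀` with `v₁ ∈ X` and `G[X]` connected. -/
theorem cvc_cut_and_count {V : Type} [Fintype V] [DecidableEq V] (G : SimpleGraph V)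
    (k : ℕ) (v₁ : V) (w : V → ℕ) (w₀ : ℕ) :
    Set.ncard {t : Finset V × Finset V × Finset V |
        (∀ u v, G.Adj u v → u ∈ t.1 ∨ v ∈ t.1) ∧ t.1.card = k ∧ (∑ u ∈ t.1, w u) = w₀ ∧
        ConsCut G t.1 t.2.1 t.2.2 ∧ v₁ ∈ t.2.1} ≡
      Set.ncard {X : Finset V |
        (∀ u v, G.Adj u v → u ∈ X ∨ v ∈ X) ∧ X.card = k ∧ (∑ u ∈ X, w u) = w₀ ∧
        v₁ ∈ X ∧ (G.induce (X : Set V)).Connected} [MOD 2] := by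
  classical
  let P : Finset V → Prop := fun X =>
    (∀ u v, G.Adj u v → u ∈ X ∨ v ∈ X) ∧ X.card = k ∧ (∑ u ∈ X, w u) = w₀
  have hcuts := Set.ncard_setOf_prod_eq_sum P
    fun X (p : Finset V × Finset V) => ConsCut G X p.1 p.2 ∧ v₁ ∈ p.1
  have hcovers := Set.ncard_setOf_and_eq_sum_ite P
    fun X => v₁ ∈ X ∧ (G.induce (X : Set V)).Connected
  simp only [P, and_assoc] at hcuts hcovers
  rw [hcuts, hcovers]
  exact Nat.ModEq.sum fun X _ => ncard_consCut_modEq G X v₁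
end

section
/- Let G = (V, E) be a finite simple undirected graph, let k be a natural number, let v₁ ∈ V, and let w : V → ℕ be a weight function. For every w₀ ∈ ℕ, the number of triples (X, X_L, X_R) such that X is a dominating set of G with |X| = k and w(X) = w₀, (X_L, X_R) is a consistent cut of G[X], and v₁ ∈ X_L, is congruent modulo 2 to the number of sets X such that X is a dominating set of G with |X| = k, w(X) = w₀, v₁ ∈ X, and G[X] is connected. -/
open Finset
open scoped symmDiff

/-- `X` is a dominating set of `G`: every vertex is in `X` or adjacent to a vertex of `X`. -/
def IsDomSet {V : Type} (G : SimpleGraph V) (X : Finset V) : Prop :=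
  ∀ v : V, v ∈ X ∨ ∃ u ∈ X, G.Adj u v

section Aux

variable {V : Type} [Fintype V] [DecidableEq V]

private lemma walk_closed (G : SimpleGraph V) {X XL : Finset V}
    (hcl : ∀ u ∈ XL, ∀ v ∈ X, v ∉ XL → ¬ G.Adj u v) :
    ∀ {a b : (X : Set V)}, (G.induce (X : Set V)).Walk a b → a.1 ∈ XL → b.1 ∈ XL := by
  intro a b p
  induction p with
  | nil => exact id
  | @cons a c b h p ih =>
    intro ha
    apply ih
    by_contra hb
    exact hcl _ ha _ (Finset.mem_coe.mp c.2) hb h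

private lemma modeq_sum {α : Type*} {s : Finset α} {f g : α → ℕ} {n : ℕ}
    (h : ∀ i ∈ s, f i ≡ g i [MOD n]) :
    (∑ i ∈ s, f i) ≡ (∑ i ∈ s, g i) [MOD n] := by
  unfold Nat.ModEq
  rw [Finset.sum_nat_mod s n f, Finset.sum_nat_mod s n g]
  congr 1
  exact Finset.sum_congr rfl h

open scoped Classical in
private lemma key (G : SimpleGraph V) (v₁ : V) (X : Finset V) (hv : v₁ ∈ X) :
    (Finset.univ.filter (fun XL : Finset V =>
      XL ⊆ X ∧ v₁ ∈ XL ∧ ∀ u ∈ XL, ∀ v ∈ X, v ∉ XL → ¬ G.Adj u v)).card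
    ≡ (if (G.induce (X : Set V)).Connected then 1 else 0) [MOD 2] := by
  by_cases hc : (G.induce (X : Set V)).Connected
  · rw [if_pos hc]
    have hset : (Finset.univ.filter (fun XL : Finset V =>
        XL ⊆ X ∧ v₁ ∈ XL ∧ ∀ u ∈ XL, ∀ v ∈ X, v ∉ XL → ¬ G.Adj u v)) = {X} := by
      ext XL
      simp only [mem_filter, mem_univ, true_and, mem_singleton]
      constructor
      · rintro ⟨hsub, hvL, hcl⟩
        by_contra hne
        obtain ⟨v, hvX, hvnL⟩ : ∃ v ∈ X, v ∉ XL := by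
          by_contra h
          push_neg at h
          exact hne (subset_antisymm hsub h)
        obtain ⟨p⟩ := hc.preconnected ⟨v₁, hv⟩ ⟨v, hvX⟩
        exact hvnL (walk_closed G hcl p hvL)
      · rintro rfl
        exact ⟨subset_rfl, hv, fun u hu v hvX hvn => absurd hvX hvn⟩
    rw [hset, card_singleton]
  · rw [if_neg hc]
    -- find a vertex not reachable from v₁ in the induced graph
    have hpre : ¬ (G.induce (X : Set V)).Preconnected := by
      intro h
      exact hc ((SimpleGraph.connected_iff _).mpr ⟨h, ⟨⟨v₁, by exact_mod_cast hv⟩⟩⟩)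
    obtain ⟨u₀, hu₀⟩ : ∃ u₀ : (X : Set V), ¬ (G.induce (X : Set V)).Reachable ⟨v₁, hv⟩ u₀ := by
      by_contra h
      push_neg at h
      exact hpre fun a b => (h a).symm.trans (h b)
    set C : Finset V := X.filter
      (fun x => ∃ hx : x ∈ X, (G.induce (X : Set V)).Reachable u₀ ⟨x, hx⟩) with hC
    have hmemC : ∀ x, x ∈ C ↔ x ∈ X ∧ ∃ hx : x ∈ X,
        (G.induce (X : Set V)).Reachable u₀ ⟨x, hx⟩ := by
      intro x; simp [hC]
    have hu₀X : u₀.1 ∈ X := Finset.mem_coe.mp u₀.2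
    have hu₀C : u₀.1 ∈ C := by
      rw [hmemC]
      exact ⟨hu₀X, hu₀X, SimpleGraph.Reachable.refl u₀⟩
    have hv₁C : v₁ ∉ C := by
      rw [hmemC]
      rintro ⟨-, hx, hr⟩
      exact hu₀ (hr.symm)
    have hCedge : ∀ u ∈ C, ∀ v ∈ X, v ∉ C → ¬ G.Adj u v := by
      intro u huC v hvX hvC hadj
      rw [hmemC] at huC
      obtain ⟨huX, hx, hr⟩ := huC
      apply hvC
      rw [hmemC]
      exact ⟨hvX, hvX, hr.trans (SimpleGraph.Adj.reachable hadj)⟩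
    -- parity via the involution XL ↦ XL ∆ C
    set s : Finset (Finset V) := Finset.univ.filter (fun XL : Finset V =>
      XL ⊆ X ∧ v₁ ∈ XL ∧ ∀ u ∈ XL, ∀ v ∈ X, v ∉ XL → ¬ G.Adj u v) with hs
    have hCsub : C ⊆ X := Finset.filter_subset _ _
    have g_mem : ∀ XL ∈ s, XL ∆ C ∈ s := by
      intro XL hXL
      rw [hs, mem_filter] at hXL ⊢
      obtain ⟨-, hsub, hvL, hcl⟩ := hXL
      refine ⟨mem_univ _, ?_, ?_, ?_⟩
      · intro x hx
        rcases Finset.mem_symmDiff.mp hx with ⟨h1, -⟩ | ⟨h1, -⟩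
        · exact hsub h1
        · exact hCsub h1
      · exact Finset.mem_symmDiff.mpr (Or.inl ⟨hvL, hv₁C⟩)
      · intro u hu v hvX hvn hadj
        rcases Finset.mem_symmDiff.mp hu with ⟨huL, huC⟩ | ⟨huC, huL⟩
        · -- u ∈ XL, u ∉ C
          by_cases hvC : v ∈ C
          · exact hCedge v hvC u (hsub huL) huC hadj.symm
          · have hvL' : v ∉ XL := fun h =>
              hvn (Finset.mem_symmDiff.mpr (Or.inl ⟨h, hvC⟩))
            exact hcl u huL v hvX hvL' hadj
        · -- u ∈ C, u ∉ XL
          have hvC : v ∈ C := by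
            by_contra hvC
            exact hCedge u huC v hvX hvC hadj
          have hvL' : v ∈ XL := by
            by_contra hvL'
            exact hvn (Finset.mem_symmDiff.mpr (Or.inr ⟨hvC, hvL'⟩))
          exact hcl v hvL' u (hCsub huC) huL hadj.symm
    have g_ne : ∀ (a : Finset V), a ∆ C ≠ a := by
      intro a heq
      by_cases h : u₀.1 ∈ a
      · have hne : u₀.1 ∉ a ∆ C := by
          simp [Finset.mem_symmDiff, h, hu₀C]
        rw [heq] at hne
        exact hne h
      · have hmem : u₀.1 ∈ a ∆ C := Finset.mem_symmDiff.mpr (Or.inr ⟨hu₀C, h⟩)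
        rw [heq] at hmem
        exact h hmem
    have hsum : ∑ _XL ∈ s, (1 : ZMod 2) = 0 :=
      Finset.sum_involution (fun XL _ => XL ∆ C) (fun a _ => by decide)
        (fun a _ _ => g_ne a) g_mem
        (fun a _ => symmDiff_symmDiff_cancel_right C a)
    have hcard : ((s.card : ZMod 2)) = 0 := by
      rw [← hsum, Finset.sum_const, nsmul_eq_mul, mul_one]
    have hdvd : 2 ∣ s.card := by
      exact_mod_cast (ZMod.natCast_eq_zero_iff s.card 2).mp hcard
    exact (Nat.modEq_zero_iff_dvd).mpr hdvd

end Aux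

/-- Cut&Count correctness for **Connected Dominating Set**: for every target weight `w₀`, the
number of triples `(X, X_L, X_R)` where `X` is a dominating set of `G` of size `k` and weight
`w₀`, `(X_L, X_R)` is a consistent cut of `G[X]` and `v₁ ∈ X_L`, is congruent modulo 2 to the
number of dominating sets `X` of size `k` and weight `w₀` with `v₁ ∈ X` and `G[X]`
connected. -/
theorem cds_cut_and_count {V : Type} [Fintype V] [DecidableEq V] (G : SimpleGraph V)
    (k : ℕ) (v₁ : V) (w : V → ℕ) (w₀ : ℕ) :
    Set.ncard {t : Finset V × Finset V × Finset V |
        IsDomSet G t.1 ∧ t.1.card = k ∧ (∑ u ∈ t.1, w u) = w₀ ∧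
        ConsCut G t.1 t.2.1 t.2.2 ∧ v₁ ∈ t.2.1} ≡
      Set.ncard {X : Finset V |
        IsDomSet G X ∧ X.card = k ∧ (∑ u ∈ X, w u) = w₀ ∧
        v₁ ∈ X ∧ (G.induce (X : Set V)).Connected} [MOD 2] := by
  classical
  set P : Finset V × Finset V × Finset V → Prop := fun t =>
    IsDomSet G t.1 ∧ t.1.card = k ∧ (∑ u ∈ t.1, w u) = w₀ ∧
      ConsCut G t.1 t.2.1 t.2.2 ∧ v₁ ∈ t.2.1 with hP
  set Q : Finset V → Prop := fun X =>
    IsDomSet G X ∧ X.card = k ∧ (∑ u ∈ X, w u) = w₀ ∧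
      v₁ ∈ X ∧ (G.induce (X : Set V)).Connected with hQ
  have hA : {t : Finset V × Finset V × Finset V | P t}.ncard
      = (Finset.univ.filter P).card := by
    rw [← Set.ncard_coe_finset]
    congr 1
    ext t
    simp
  have hB : {X : Finset V | Q X}.ncard = (Finset.univ.filter Q).card := by
    rw [← Set.ncard_coe_finset]
    congr 1
    ext X
    simp
  show {t : Finset V × Finset V × Finset V | P t}.ncard ≡ {X : Finset V | Q X}.ncard [MOD 2]
  rw [hA, hB]
  -- decompose the triple count fiberwise over X = t.1
  rw [Finset.card_eq_sum_card_fiberwise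
    (f := fun t : Finset V × Finset V × Finset V => t.1)
    (s := Finset.univ.filter P) (t := (Finset.univ : Finset (Finset V)))
    (fun x _ => Finset.mem_univ _)]
  rw [Finset.card_filter Q Finset.univ]
  apply modeq_sum
  intro X _
  -- the fiber over X is in bijection with suitable XL's
  have hfiber : ((Finset.univ.filter P).filter
        (fun t : Finset V × Finset V × Finset V => t.1 = X)).card
      = (Finset.univ.filter (fun XL : Finset V =>
          (IsDomSet G X ∧ X.card = k ∧ (∑ u ∈ X, w u) = w₀) ∧
          XL ⊆ X ∧ v₁ ∈ XL ∧ ∀ u ∈ XL, ∀ v ∈ X, v ∉ XL → ¬ G.Adj u v)).card := by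
    apply Finset.card_bij' (i := fun t _ => t.2.1)
      (j := fun XL _ => (X, XL, X \ XL))
    · intro t ht
      rw [Finset.mem_filter, Finset.mem_filter] at ht
      obtain ⟨⟨-, hdom, hcardk, hw, hcut, hvL⟩, hX⟩ := ht
      subst hX
      obtain ⟨hunion, hdisj, hedge⟩ := hcut
      rw [Finset.mem_filter]
      refine ⟨Finset.mem_univ _, ⟨hdom, hcardk, hw⟩, ?_, hvL, ?_⟩
      · rw [← hunion]; exact Finset.subset_union_left
      · intro u hu v hvX hvn
        have hvR : v ∈ t.2.2 := by
          rw [← hunion] at hvX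
          rcases Finset.mem_union.mp hvX with h | h
          · exact absurd h hvn
          · exact h
        exact hedge u hu v hvR
    · intro XL hXL
      rw [Finset.mem_filter] at hXL
      obtain ⟨-, ⟨hdom, hcardk, hw⟩, hsub, hvL, hcl⟩ := hXL
      rw [Finset.mem_filter, Finset.mem_filter]
      refine ⟨⟨Finset.mem_univ _, hdom, hcardk, hw, ?_, hvL⟩, rfl⟩
      refine ⟨Finset.union_sdiff_of_subset hsub, Finset.disjoint_sdiff, ?_⟩
      intro u hu v hvR
      rw [Finset.mem_sdiff] at hvR
      exact hcl u hu v hvR.1 hvR.2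
    · intro t ht
      rw [Finset.mem_filter, Finset.mem_filter] at ht
      obtain ⟨⟨-, -, -, -, hcut, -⟩, hX⟩ := ht
      obtain ⟨hunion, hdisj, -⟩ := hcut
      have h22 : t.2.2 = X \ t.2.1 := by
        rw [← hX, ← hunion, Finset.union_sdiff_cancel_left hdisj]
      rw [Prod.ext_iff, Prod.ext_iff]
      exact ⟨hX.symm ▸ rfl, rfl, h22.symm⟩
    · intro XL hXL
      rfl
  rw [hfiber]
  by_cases hd : IsDomSet G X ∧ X.card = k ∧ (∑ u ∈ X, w u) = w₀
  · by_cases hv : v₁ ∈ X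
    · have h1 : (Finset.univ.filter (fun XL : Finset V =>
          (IsDomSet G X ∧ X.card = k ∧ (∑ u ∈ X, w u) = w₀) ∧
          XL ⊆ X ∧ v₁ ∈ XL ∧ ∀ u ∈ XL, ∀ v ∈ X, v ∉ XL → ¬ G.Adj u v))
          = (Finset.univ.filter (fun XL : Finset V =>
          XL ⊆ X ∧ v₁ ∈ XL ∧ ∀ u ∈ XL, ∀ v ∈ X, v ∉ XL → ¬ G.Adj u v)) := by
        apply Finset.filter_congr
        intro XL _
        simp [hd]
      have h2 : (if Q X then 1 else 0)
          = (if (G.induce (X : Set V)).Connected then 1 else 0) := by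
        by_cases hcon : (G.induce (X : Set V)).Connected
        · rw [if_pos hcon, if_pos (by exact ⟨hd.1, hd.2.1, hd.2.2, hv, hcon⟩)]
        · rw [if_neg hcon, if_neg (fun h => hcon h.2.2.2.2)]
      rw [h1, h2]
      exact key G v₁ X hv
    · have h1 : (Finset.univ.filter (fun XL : Finset V =>
          (IsDomSet G X ∧ X.card = k ∧ (∑ u ∈ X, w u) = w₀) ∧
          XL ⊆ X ∧ v₁ ∈ XL ∧ ∀ u ∈ XL, ∀ v ∈ X, v ∉ XL → ¬ G.Adj u v)) = ∅ := by
        rw [Finset.filter_eq_empty_iff]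
        rintro XL - ⟨-, hsub, hvL, -⟩
        exact hv (hsub hvL)
      rw [h1, Finset.card_empty, if_neg (fun h => hv h.2.2.2.1)]
  · have h1 : (Finset.univ.filter (fun XL : Finset V =>
        (IsDomSet G X ∧ X.card = k ∧ (∑ u ∈ X, w u) = w₀) ∧
        XL ⊆ X ∧ v₁ ∈ XL ∧ ∀ u ∈ XL, ∀ v ∈ X, v ∉ XL → ¬ G.Adj u v)) = ∅ := by
      rw [Finset.filter_eq_empty_iff]
      rintro XL - ⟨hX, -⟩
      exact hd hX
    rw [h1, Finset.card_empty, if_neg (fun h => hd ⟨h.1, h.2.1, h.2.2.1⟩)]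
end

section
/- Let G = (V, E) be a finite simple undirected graph, let k be a natural number, let v₁ ∈ V, and let w_X, w_A : V → ℕ be weight functions; define the weight of a pair (X, A) of disjoint subsets of V as w(X, A) = Σ_{x ∈ X} w_X(x) + Σ_{a ∈ A} w_A(a). Call (X, A) a candidate if X ∩ A = ∅, |X| = k, no edge of G has both endpoints in A, and no edge of G has both endpoints in V ∖ (X ∪ A). Then for every w₀ ∈ ℕ, the number of triples ((X, A), (X_L, X_R)) such that (X, A) is a candidate with w(X, A) = w₀, (X_L, X_R) is a consistent cut of G[X], and v₁ ∈ X_L, is congruent modulo 2 to the number of candidates (X, A) with w(X, A) = w₀, v₁ ∈ X, and G[X] connected. -/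
/-- `(X, A)` is a candidate for connected odd cycle transversal: `X` and `A` are disjoint,
`|X| = k`, `A` is independent in `G`, and `V ∖ (X ∪ A)` is independent in `G`
(i.e. `(A, V ∖ (X ∪ A))` is a bipartition of `G − X`). -/
def OCTCandidate {V : Type} [DecidableEq V] (G : SimpleGraph V) (k : ℕ)
    (X A : Finset V) : Prop :=
  Disjoint X A ∧ X.card = k ∧
    (∀ u ∈ A, ∀ v ∈ A, ¬ G.Adj u v) ∧
    (∀ u v : V, u ∉ X → u ∉ A → v ∉ X → v ∉ A → ¬ G.Adj u v)

/-!
Fix a candidate `(X, A)` and count the consistent cuts `(X_L, X_R)` of `G[X]` with `v₁ ∈ X_L`.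
If `G[X]` is connected, `(X, ∅)` is the only one. Otherwise some component `C` of `G[X]` misses
`v₁`, and moving `C` to the other side, `(X_L ∆ C, X_R ∆ C)`, is a fixed-point-free involution on
these cuts, so there is an even number of them. Summing over the candidates gives the congruence.
-/

open Finset

theorem Set.even_ncard_of_involution {α : Type*} {s : Set α} (f : α → α)
    (hmaps : ∀ a ∈ s, f a ∈ s) (hinv : ∀ a ∈ s, f (f a) = a) (hne : ∀ a ∈ s, f a ≠ a) :
    Even s.ncard := by
  obtain hfin | hinf := s.finite_or_infinite
  · rw [Set.ncard_eq_toFinset_card s hfin,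
      ← ZMod.natCast_eq_zero_iff_even, card_eq_sum_ones, Nat.cast_sum]
    refine sum_involution (fun a _ => f a) (fun _ _ => by decide)
      (fun a ha _ => hne a (hfin.mem_toFinset.1 ha))
      (fun a ha => hfin.mem_toFinset.2 (hmaps a (hfin.mem_toFinset.1 ha)))
      (fun a ha => hinv a (hfin.mem_toFinset.1 ha))
  · rw [hinf.ncard]
    exact .zero

theorem Set.ncard_prod_fiberwise_modEq_two {α β : Type*} [Finite α] [Finite β]
    {P R : α → Prop} {Q : α → β → Prop} (hQ : ∀ a, P a → (Odd {b | Q a b}.ncard ↔ R a)) :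
    {t : α × β | P t.1 ∧ Q t.1 t.2}.ncard ≡ {a | P a ∧ R a}.ncard [MOD 2] := by
  classical
  have := Fintype.ofFinite α
  have := Fintype.ofFinite β
  rw [← ZMod.natCast_eq_natCast_iff]
  simp only [Set.ncard_eq_toFinset_card', Set.toFinset_ofPred, card_filter, Nat.cast_sum,
    Fintype.sum_prod_type, ite_and]
  refine sum_congr rfl fun a _ => ?_
  by_cases hP : P a
  · have hfiber : ∑ b, ((if Q a b then 1 else 0 : ℕ) : ZMod 2) = ({b | Q a b}.ncard : ℕ) := by
      simp only [Set.ncard_eq_toFinset_card', Set.toFinset_ofPred, card_filter, Nat.cast_sum]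
    simp only [if_pos hP, hfiber]
    split_ifs with hR
    · exact ZMod.natCast_eq_one_iff_odd.2 ((hQ a hP).2 hR)
    · exact ZMod.natCast_eq_zero_iff_even.2 (Nat.not_odd_iff_even.1 (mt (hQ a hP).1 hR))
  · simp [hP]

theorem SimpleGraph.Reachable.mem_of_forall_adj {W : Type*} {H : SimpleGraph W} {s : Set W}
    (hs : ∀ x ∈ s, ∀ y, H.Adj x y → y ∈ s) {a b : W} (h : H.Reachable a b) (ha : a ∈ s) :
    b ∈ s := by
  obtain ⟨p⟩ := h
  induction p with
  | nil => exact ha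
  | cons hadj _ ih => exact ih (hs _ ha _ hadj)

namespace ConsCut

variable {V : Type} [DecidableEq V] {G : SimpleGraph V} {X L R L' R' : Finset V}

theorem mem_iff (h : ConsCut G X L R) {x : V} : x ∈ X ↔ x ∈ L ∨ x ∈ R := by
  rw [← h.1, mem_union]

theorem self_empty (G : SimpleGraph V) (X : Finset V) : ConsCut G X X ∅ :=
  ⟨union_empty X, disjoint_empty_right X, fun _ _ _ h => (notMem_empty _ h).elim⟩

theorem of_forall_adj (hL : L ⊆ X) (hclosed : ∀ x ∈ L, ∀ y ∈ X, G.Adj x y → y ∈ L) :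
    ConsCut G X L (X \ L) :=
  ⟨union_sdiff_of_subset hL, disjoint_sdiff, fun x hx y hy hadj =>
    (mem_sdiff.1 hy).2 (hclosed x hx y (mem_sdiff.1 hy).1 hadj)⟩

theorem symmDiff (h : ConsCut G X L R) (h' : ConsCut G X L' R') :
    ConsCut G X (symmDiff L L') (symmDiff R L') := by
  have hX := fun x => h.mem_iff (x := x)
  have hX' := fun x => h'.mem_iff (x := x)
  have hLR := disjoint_left.1 h.2.1
  have hLR' := disjoint_left.1 h'.2.1
  refine ⟨?_, ?_, ?_⟩
  · ext x
    simp only [mem_union, mem_symmDiff]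
    grind
  · rw [disjoint_left]
    intro x
    simp only [mem_symmDiff]
    grind
  · intro u hu v hv hadj
    simp only [mem_symmDiff] at hu hv
    have := h.2.2
    have := h'.2.2
    grind [G.adj_symm]

theorem eq_self_empty_of_connected {v : V} (h : ConsCut G X L R) (hv : v ∈ L)
    (hconn : (G.induce (X : Set V)).Connected) : L = X ∧ R = ∅ := by
  have hvX : v ∈ X := h.mem_iff.2 (.inl hv)
  have hXL : ∀ x ∈ X, x ∈ L := fun x hx =>
    (hconn.preconnected ⟨v, hvX⟩ ⟨x, hx⟩).mem_of_forall_adj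
      (s := {y : (X : Set V) | (y : V) ∈ L})
      (fun y hy z hadj => (h.mem_iff.1 z.2).resolve_right fun hz => h.2.2 _ hy _ hz hadj) hv
  have hR : R = ∅ := eq_empty_of_forall_notMem fun x hx =>
    disjoint_left.1 h.2.1 (hXL x (h.mem_iff.2 (.inr hx))) hx
  exact ⟨by rw [← h.1, hR, union_empty], hR⟩

end ConsCut

section RootedCuts

variable {V : Type} [DecidableEq V] {G : SimpleGraph V} {X : Finset V} {v : V}

theorem ncard_consCut_of_connected (hv : v ∈ X) (hconn : (G.induce (X : Set V)).Connected) :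
    {c : Finset V × Finset V | ConsCut G X c.1 c.2 ∧ v ∈ c.1}.ncard = 1 := by
  rw [Set.ncard_eq_one]
  refine ⟨(X, ∅), Set.ext fun ⟨L, R⟩ => ⟨fun ⟨h, hvL⟩ => ?_, ?_⟩⟩
  · obtain ⟨rfl, rfl⟩ := h.eq_self_empty_of_connected hvL hconn
    rfl
  · rintro ⟨⟩
    exact ⟨ConsCut.self_empty G X, hv⟩

theorem even_ncard_consCut_of_not_reachable {u : V} (hu : u ∈ X) (hv : v ∈ X)
    (huv : ¬ (G.induce (X : Set V)).Reachable ⟨u, hu⟩ ⟨v, hv⟩) :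
    Even {c : Finset V × Finset V | ConsCut G X c.1 c.2 ∧ v ∈ c.1}.ncard := by
  classical
  set C := X.filter fun x => ∃ hx : x ∈ X, (G.induce (X : Set V)).Reachable ⟨u, hu⟩ ⟨x, hx⟩
  have hC : ConsCut G X C (X \ C) := by
    refine ConsCut.of_forall_adj (filter_subset _ _) fun x hx y hy hadj => ?_
    obtain ⟨hxX, hreach⟩ := (mem_filter.1 hx).2
    exact mem_filter.2 ⟨hy, hy, hreach.trans (SimpleGraph.Adj.reachable (G := G.induce _)
      (u := ⟨x, hxX⟩) (v := ⟨y, hy⟩) hadj)⟩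
  have huC : u ∈ C := mem_filter.2 ⟨hu, hu, .rfl⟩
  have hvC : v ∉ C := fun h => huv (mem_filter.1 h).2.2
  refine Set.even_ncard_of_involution (fun c => (symmDiff c.1 C, symmDiff c.2 C))
    (fun c ⟨h, hvL⟩ => ⟨h.symmDiff hC, mem_symmDiff.2 (.inl ⟨hvL, hvC⟩)⟩)
    (fun c _ => by simp only [symmDiff_symmDiff_cancel_right]) (fun c _ heq => ?_)
  have : C = ∅ := symmDiff_eq_left.1 (congrArg Prod.fst heq)
  exact notMem_empty u (this ▸ huC)

theorem odd_ncard_consCut_iff :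
    Odd {c : Finset V × Finset V | ConsCut G X c.1 c.2 ∧ v ∈ c.1}.ncard ↔
      v ∈ X ∧ (G.induce (X : Set V)).Connected := by
  refine ⟨fun hodd => ?_, fun ⟨hv, hconn⟩ => ncard_consCut_of_connected hv hconn ▸ odd_one⟩
  obtain ⟨⟨L, R⟩, h, hvL⟩ := Set.nonempty_of_ncard_ne_zero hodd.pos.ne'
  have hv : v ∈ X := h.mem_iff.2 (.inl hvL)
  refine ⟨hv, ?_⟩
  by_contra hconn
  rw [SimpleGraph.connected_iff_exists_forall_reachable] at hconn
  push Not at hconn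
  obtain ⟨u, hu⟩ := hconn ⟨v, hv⟩
  exact Nat.not_even_iff_odd.2 hodd
    (even_ncard_consCut_of_not_reachable u.2 hv fun h => hu h.symm)

end RootedCuts

/-- Cut&Count correctness for **Connected Odd Cycle Transversal**: for every target weight
`w₀`, the number of tuples `((X, A), (X_L, X_R))` where `(X, A)` is a candidate of weight
`w₀`, `(X_L, X_R)` is a consistent cut of `G[X]` and `v₁ ∈ X_L`, is congruent modulo 2 to
the number of candidates `(X, A)` of weight `w₀` with `v₁ ∈ X` and `G[X]` connected. -/
theorem coct_cut_and_count {V : Type} [Fintype V] [DecidableEq V] (G : SimpleGraph V)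
    (k : ℕ) (v₁ : V) (wX wA : V → ℕ) (w₀ : ℕ) :
    Set.ncard {t : (Finset V × Finset V) × Finset V × Finset V |
        OCTCandidate G k t.1.1 t.1.2 ∧
        (∑ x ∈ t.1.1, wX x) + (∑ a ∈ t.1.2, wA a) = w₀ ∧
        ConsCut G t.1.1 t.2.1 t.2.2 ∧ v₁ ∈ t.2.1} ≡
      Set.ncard {p : Finset V × Finset V |
        OCTCandidate G k p.1 p.2 ∧
        (∑ x ∈ p.1, wX x) + (∑ a ∈ p.2, wA a) = w₀ ∧
        v₁ ∈ p.1 ∧ (G.induce (p.1 : Set V)).Connected} [MOD 2] := by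
  have key := Set.ncard_prod_fiberwise_modEq_two
    (P := fun p : Finset V × Finset V =>
      OCTCandidate G k p.1 p.2 ∧ (∑ x ∈ p.1, wX x) + (∑ a ∈ p.2, wA a) = w₀)
    fun p _ => odd_ncard_consCut_iff (G := G) (X := p.1) (v := v₁)
  simpa only [and_assoc] using key
end

section
/- Let G = (V, E) be a finite simple undirected graph and let V₁, V₂ ⊆ V be disjoint sets such that no edge of G joins a vertex of V₁ to a vertex of V₂. Then the map sending a consistently cut subgraph (X, (X_L, X_R)) of G[V₁ ∪ V₂] to the pair ((X ∩ V₁, (X_L ∩ V₁, X_R ∩ V₁)), (X ∩ V₂, (X_L ∩ V₂, X_R ∩ V₂))) is a bijection from the set of consistently cut subgraphs of G[V₁ ∪ V₂] onto the Cartesian product of the set of consistently cut subgraphs of G[V₁] with the set of consistently cut subgraphs of G[V₂]. -/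
/-- The set of consistently cut subgraphs `(X, (X_L, X_R))` of `G[W]`: `X ⊆ W` and
`(X_L, X_R)` is a consistent cut of `G[X]`. -/
def CCS {V : Type} [DecidableEq V] (G : SimpleGraph V) (W : Finset V) :
    Set (Finset V × Finset V × Finset V) :=
  {t | t.1 ⊆ W ∧ ConsCut G t.1 t.2.1 t.2.2}

lemma split_eq {V : Type} [DecidableEq V] {A V₁ V₂ : Finset V} (h : A ⊆ V₁ ∪ V₂) :
    A ∩ V₁ ∪ A ∩ V₂ = A := by
  rw [← Finset.inter_union_distrib_left, Finset.inter_eq_left.mpr h]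

/-- If `V₁, V₂` are disjoint and no edge of `G` joins `V₁` to `V₂`, then restriction to the
two sides is a bijection from the consistently cut subgraphs of `G[V₁ ∪ V₂]` onto the product
of the consistently cut subgraphs of `G[V₁]` and those of `G[V₂]`. -/
theorem ccs_union_bijOn {V : Type} [Fintype V] [DecidableEq V] (G : SimpleGraph V)
    (V₁ V₂ : Finset V) (hdisj : Disjoint V₁ V₂)
    (hsep : ∀ u ∈ V₁, ∀ v ∈ V₂, ¬ G.Adj u v) :
    Set.BijOn
      (fun t : Finset V × Finset V × Finset V =>
        ((t.1 ∩ V₁, t.2.1 ∩ V₁, t.2.2 ∩ V₁), (t.1 ∩ V₂, t.2.1 ∩ V₂, t.2.2 ∩ V₂)))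
      (CCS G (V₁ ∪ V₂)) (CCS G V₁ ×ˢ CCS G V₂) := by
  constructor
  · rintro ⟨X, XL, XR⟩ ⟨hX, hpart, hd, hedge⟩
    refine ⟨⟨Finset.inter_subset_right, ?_, ?_, ?_⟩, ⟨Finset.inter_subset_right, ?_, ?_, ?_⟩⟩
    · rw [← Finset.union_inter_distrib_right, hpart]
    · exact hd.mono Finset.inter_subset_left Finset.inter_subset_left
    · intro u hu v hv
      exact hedge u (Finset.mem_inter.mp hu).1 v (Finset.mem_inter.mp hv).1
    · rw [← Finset.union_inter_distrib_right, hpart]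
    · exact hd.mono Finset.inter_subset_left Finset.inter_subset_left
    · intro u hu v hv
      exact hedge u (Finset.mem_inter.mp hu).1 v (Finset.mem_inter.mp hv).1
  constructor
  · rintro ⟨X, XL, XR⟩ ⟨hX, hpart, -, -⟩ ⟨X', XL', XR'⟩ ⟨hX', hpart', -, -⟩ heq
    dsimp only at hX hpart hX' hpart'
    simp only [Prod.mk.injEq] at heq
    obtain ⟨⟨e1, e2, e3⟩, e4, e5, e6⟩ := heq
    have hXL : XL ⊆ V₁ ∪ V₂ := (Finset.subset_union_left.trans (hpart ▸ hX))
    have hXR : XR ⊆ V₁ ∪ V₂ := (Finset.subset_union_right.trans (hpart ▸ hX))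
    have hXL' : XL' ⊆ V₁ ∪ V₂ := (Finset.subset_union_left.trans (hpart' ▸ hX'))
    have hXR' : XR' ⊆ V₁ ∪ V₂ := (Finset.subset_union_right.trans (hpart' ▸ hX'))
    refine Prod.ext ?_ (Prod.ext ?_ ?_) <;> simp only
    · rw [← split_eq hX, ← split_eq hX', e1, e4]
    · rw [← split_eq hXL, ← split_eq hXL', e2, e5]
    · rw [← split_eq hXR, ← split_eq hXR', e3, e6]
  · rintro ⟨⟨X₁, L₁, R₁⟩, X₂, L₂, R₂⟩
      ⟨⟨hX₁, hp₁, hd₁, he₁⟩, hX₂, hp₂, hd₂, he₂⟩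
    have hL₁ : L₁ ⊆ V₁ := Finset.subset_union_left.trans (hp₁ ▸ hX₁)
    have hR₁ : R₁ ⊆ V₁ := Finset.subset_union_right.trans (hp₁ ▸ hX₁)
    have hL₂ : L₂ ⊆ V₂ := Finset.subset_union_left.trans (hp₂ ▸ hX₂)
    have hR₂ : R₂ ⊆ V₂ := Finset.subset_union_right.trans (hp₂ ▸ hX₂)
    refine ⟨(X₁ ∪ X₂, L₁ ∪ L₂, R₁ ∪ R₂), ⟨Finset.union_subset_union hX₁ hX₂, ?_, ?_, ?_⟩, ?_⟩
    · rw [Finset.union_union_union_comm, hp₁, hp₂]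
    · refine Finset.disjoint_union_left.mpr ⟨?_, ?_⟩ <;>
        refine Finset.disjoint_union_right.mpr ⟨?_, ?_⟩
      · exact hd₁
      · exact hdisj.mono hL₁ hR₂
      · exact (hdisj.mono hR₁ hL₂).symm
      · exact hd₂
    · intro u hu v hv
      rcases Finset.mem_union.mp hu with hu | hu <;>
        rcases Finset.mem_union.mp hv with hv | hv
      · exact he₁ u hu v hv
      · exact hsep u (hL₁ hu) v (hR₂ hv)
      · exact fun h => hsep v (hR₁ hv) u (hL₂ hu) h.symm
      · exact he₂ u hu v hv
    · have key : ∀ A B : Finset V, A ⊆ V₁ → B ⊆ V₂ → (A ∪ B) ∩ V₁ = A := by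
        intro A B hA hB
        rw [Finset.union_inter_distrib_right, Finset.inter_eq_left.mpr hA,
          Finset.disjoint_iff_inter_eq_empty.mp (hdisj.mono_right hB).symm, Finset.union_empty]
      have key2 : ∀ A B : Finset V, A ⊆ V₁ → B ⊆ V₂ → (A ∪ B) ∩ V₂ = B := by
        intro A B hA hB
        rw [Finset.union_inter_distrib_right, Finset.inter_eq_left.mpr hB,
          Finset.disjoint_iff_inter_eq_empty.mp (hdisj.symm.mono_right hA).symm, Finset.empty_union]
      simp only [key _ _ hX₁ hX₂, key _ _ hL₁ hL₂, key _ _ hR₁ hR₂,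
        key2 _ _ hX₁ hX₂, key2 _ _ hL₁ hL₂, key2 _ _ hR₁ hR₂]
end

section
/- Let G = (V, E) be a finite connected simple undirected graph with at least one edge and let k ≥ 1 be a natural number. Let G' be the graph on vertex set V ⊎ E in which v ∈ V is adjacent to e ∈ E if and only if v is an endpoint of e (and there are no other edges), i.e., G' is obtained from G by subdividing every edge once, and let T = E ⊆ V(G') be the set of subdivision vertices. Then G has a set X ⊆ V with |X| ≤ k such that X is a vertex cover of G and G[X] is connected, if and only if G' has a set X' ⊆ V ⊎ E with T ⊆ X', |X'| ≤ |E| + k, and G'[X'] connected. -/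
/-!
Given a connected vertex cover `X` of `G`, the set `X ∪ E` is connected in the subdivision:
adjacent `x, y ∈ X` are joined through `w_{xy}`, and every `w_e` is adjacent to an endpoint of `e`
in `X`. Conversely, let `X' ⊇ E` be connected in the subdivision. If `X'` meets `V`, every `w_e`
has a neighbour in `X'`, i.e. an endpoint in `X := X' ∩ V`, so `X` is a vertex cover; sending each
`w_e` to such an endpoint maps walks in `G'[X']` to walks in `G[X]`. If `X'` misses `V`, then
`X' = {w_e}` for the only edge `e` of `G`, which either endpoint covers.
-/

/-- The subdivision of `G`: the graph on `V ⊕ E(G)` in which `v : V` is adjacent to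
`e : E(G)` if and only if `v` is an endpoint of `e`, and there are no other edges. -/
def Subdiv {V : Type} (G : SimpleGraph V) : SimpleGraph (V ⊕ G.edgeSet) where
  Adj a b :=
    (∃ (v : V) (e : G.edgeSet), a = Sum.inl v ∧ b = Sum.inr e ∧ v ∈ (e : Sym2 V)) ∨
    (∃ (v : V) (e : G.edgeSet), a = Sum.inr e ∧ b = Sum.inl v ∧ v ∈ (e : Sym2 V))
  symm := by
    constructor
    rintro a b (⟨v, e, rfl, rfl, h⟩ | ⟨v, e, rfl, rfl, h⟩)
    · exact Or.inr ⟨v, e, rfl, rfl, h⟩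
    · exact Or.inl ⟨v, e, rfl, rfl, h⟩
  loopless := by
    constructor
    rintro a (⟨v, e, rfl, h, -⟩ | ⟨v, e, rfl, h, -⟩) <;> simp_all

open SimpleGraph

theorem SimpleGraph.Reachable.lift {V W : Type*} {G : SimpleGraph V} {H : SimpleGraph W}
    (f : V → W) (hf : ∀ ⦃a b⦄, G.Adj a b → H.Reachable (f a) (f b)) {a b : V}
    (h : G.Reachable a b) : H.Reachable (f a) (f b) := by
  rw [reachable_iff_reflTransGen] at h ⊢
  exact Relation.ReflTransGen.lift' f
    (fun a b hab ↦ (reachable_iff_reflTransGen _ _).1 (hf hab)) _ _ h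

theorem SimpleGraph.induce_reachable_of_mem_edge {V : Type*} {G : SimpleGraph V} {X : Set V}
    {e : Sym2 V} (he : e ∈ G.edgeSet) {x y : V} (hxe : x ∈ e) (hye : y ∈ e) (hx : x ∈ X)
    (hy : y ∈ X) : (G.induce X).Reachable ⟨x, hx⟩ ⟨y, hy⟩ := by
  obtain rfl | hxy := eq_or_ne x y
  · rfl
  · exact Adj.reachable (G.adj_iff_exists_edge.2 ⟨hxy, e, he, hxe, hye⟩)

theorem SimpleGraph.isVertexCover_singleton_of_subsingleton_edgeSet {V : Type*}
    {G : SimpleGraph V} (hG : G.edgeSet.Subsingleton) {e : Sym2 V} (he : e ∈ G.edgeSet) {p : V}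
    (hp : p ∈ e) : G.IsVertexCover {p} := by
  intro a b hab
  obtain rfl := hG (G.mem_edgeSet.2 hab) he
  rcases Sym2.mem_iff.1 hp with rfl | rfl <;> simp

namespace Subdiv

variable {V : Type} {G : SimpleGraph V} {v w : V} {e f : G.edgeSet}

@[simp] lemma adj_inl_inr : (Subdiv G).Adj (.inl v) (.inr e) ↔ v ∈ (e : Sym2 V) := by
  simp [Subdiv]

@[simp] lemma adj_inr_inl : (Subdiv G).Adj (.inr e) (.inl v) ↔ v ∈ (e : Sym2 V) := by
  simp [Subdiv]

@[simp] lemma not_adj_inl_inl : ¬(Subdiv G).Adj (.inl v) (.inl w) := by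
  simp [Subdiv]

@[simp] lemma not_adj_inr_inr : ¬(Subdiv G).Adj (.inr e) (.inr f) := by
  simp [Subdiv]

variable {S : Set (V ⊕ G.edgeSet)}

lemma exists_endpoint_mem_of_connected (hS : ((Subdiv G).induce S).Connected)
    (he : .inr e ∈ S) {a : V ⊕ G.edgeSet} (ha : a ∈ S) (hne : a ≠ .inr e) :
    ∃ v ∈ (e : Sym2 V), .inl v ∈ S := by
  have : Nontrivial S := ⟨⟨a, ha⟩, ⟨_, he⟩, by simpa using hne⟩
  obtain ⟨⟨v | f, hc⟩, hadj⟩ := hS.preconnected.exists_adj_of_nontrivial ⟨_, he⟩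
  · exact ⟨v, by simpa using hadj, hc⟩
  · simp at hadj

lemma isVertexCover_preimage_inl (hS : ((Subdiv G).induce S).Connected)
    (hT : ∀ e, .inr e ∈ S) (hv : .inl v ∈ S) : G.IsVertexCover (Sum.inl ⁻¹' S) := by
  intro a b hab
  obtain ⟨w, hw, hwS⟩ :=
    exists_endpoint_mem_of_connected hS (hT ⟨s(a, b), G.mem_edgeSet.2 hab⟩) hv (by simp)
  rcases Sym2.mem_iff.1 hw with rfl | rfl
  exacts [.inl hwS, .inr hwS]

lemma subsingleton_edgeSet_of_connected (hS : ((Subdiv G).induce S).Connected)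
    (hT : ∀ e, .inr e ∈ S) (hv : ∀ v, .inl v ∉ S) : G.edgeSet.Subsingleton := by
  intro e he f hf
  by_contra hne
  obtain ⟨w, -, hw⟩ := exists_endpoint_mem_of_connected hS (hT ⟨f, hf⟩) (hT ⟨e, he⟩)
    (by simpa using hne)
  exact hv w hw

lemma connected_induce_of_isVertexCover (hT : ∀ e, .inr e ∈ S)
    (hcover : G.IsVertexCover (Sum.inl ⁻¹' S)) (hX : (G.induce (Sum.inl ⁻¹' S)).Connected) :
    ((Subdiv G).induce S).Connected := by
  let ι : Sum.inl ⁻¹' S → S := fun x ↦ ⟨.inl x, x.2⟩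
  have hι : ∀ x y, (G.induce (Sum.inl ⁻¹' S)).Reachable x y →
      ((Subdiv G).induce S).Reachable (ι x) (ι y) := by
    refine fun x y h ↦ h.lift ι fun a b hab ↦ ?_
    let m : S := ⟨.inr ⟨s(a, b), hab⟩, hT _⟩
    exact (Adj.reachable (v := m) (by simp [ι, m])).trans (Adj.reachable (by simp [ι, m]))
  have hreach : ∀ a : S, ∃ x, ((Subdiv G).induce S).Reachable a (ι x) := by
    rintro ⟨v | ⟨⟨p, q⟩, hpq⟩, ha⟩
    · exact ⟨⟨v, ha⟩, .rfl⟩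
    · rcases hcover hpq with hp | hq
      · exact ⟨⟨p, hp⟩, Adj.reachable (by simp [ι])⟩
      · exact ⟨⟨q, hq⟩, Adj.reachable (by simp [ι])⟩
  obtain ⟨x₀⟩ := hX.nonempty
  have : Nonempty S := ⟨ι x₀⟩
  refine ⟨fun a b ↦ ?_⟩
  obtain ⟨x, hx⟩ := hreach a
  obtain ⟨y, hy⟩ := hreach b
  exact hx.trans ((hι x y (hX.preconnected x y)).trans hy.symm)

lemma connected_induce_preimage_inl (hS : ((Subdiv G).induce S).Connected)
    (hv : .inl v ∈ S) : (G.induce (Sum.inl ⁻¹' S)).Connected := by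
  have hend : ∀ e : G.edgeSet, .inr e ∈ S → ∃ w ∈ (e : Sym2 V), .inl w ∈ S := fun e he ↦
    exists_endpoint_mem_of_connected hS he hv (by simp)
  have : Nonempty V := ⟨v⟩
  choose! g hg using hend
  let φ : S → Sum.inl ⁻¹' S := fun a ↦ ⟨Sum.elim id g a.1, by
    obtain ⟨w | e, ha⟩ := a
    exacts [ha, (hg e ha).2]⟩
  have : Nonempty (Sum.inl ⁻¹' S) := ⟨⟨v, hv⟩⟩
  refine ⟨fun x y ↦ (hS.preconnected ⟨.inl x, x.2⟩ ⟨.inl y, y.2⟩).lift φ ?_⟩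
  rintro ⟨w | e, ha⟩ ⟨w' | e', hb⟩ hab <;> simp only [induce_adj, adj_inl_inr, adj_inr_inl,
    not_adj_inl_inl, not_adj_inr_inr] at hab
  · exact induce_reachable_of_mem_edge e'.2 hab (hg e' hb).1 _ _
  · exact induce_reachable_of_mem_edge e.2 (hg e ha).1 hab _ _

end Subdiv

theorem cvc_iff_steiner_subdivision_general {V : Type} [Fintype V]
    (G : SimpleGraph V)
    (k : ℕ) (hk : 1 ≤ k) :
    (∃ X : Finset V, X.card ≤ k ∧ (∀ u v, G.Adj u v → u ∈ X ∨ v ∈ X) ∧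
      (G.induce (X : Set V)).Connected) ↔
    (∃ X' : Finset (V ⊕ G.edgeSet), (∀ e : G.edgeSet, Sum.inr e ∈ X') ∧
      X'.card ≤ Nat.card G.edgeSet + k ∧
      ((Subdiv G).induce (X' : Set (V ⊕ G.edgeSet))).Connected) := by
  have := Fintype.ofFinite G.edgeSet
  constructor
  · rintro ⟨X, hcard, hcover, hconn⟩
    have hX : Sum.inl ⁻¹' ((X.disjSum Finset.univ : Finset (V ⊕ G.edgeSet)) :
        Set (V ⊕ G.edgeSet)) = (X : Set V) := by
      ext; simp
    refine ⟨X.disjSum Finset.univ, by simp, by simpa [Nat.card_eq_fintype_card, add_comm], ?_⟩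
    exact Subdiv.connected_induce_of_isVertexCover (by simp) (hX ▸ fun _ _ ↦ hcover _ _)
      (hX ▸ hconn)
  · rintro ⟨X', hT, hcard, hconn⟩
    by_cases hv : ∃ v, Sum.inl v ∈ X'
    · obtain ⟨v, hv⟩ := hv
      have hX : (X'.toLeft : Set V) = Sum.inl ⁻¹' (X' : Set (V ⊕ G.edgeSet)) := by ext; simp
      have hright : X'.toRight = Finset.univ := Finset.eq_univ_of_forall (by simpa using hT)
      have hsplit := X'.card_toLeft_add_card_toRight
      rw [hright, Finset.card_univ, ← Nat.card_eq_fintype_card] at hsplit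
      have hcover : G.IsVertexCover (X'.toLeft : Set V) :=
        hX ▸ Subdiv.isVertexCover_preimage_inl hconn hT hv
      exact ⟨X'.toLeft, by omega, fun _ _ ↦ @hcover _ _,
        hX ▸ Subdiv.connected_induce_preimage_inl hconn hv⟩
    · push Not at hv
      obtain ⟨⟨_ | ⟨⟨p, q⟩, he⟩, h₀⟩⟩ := hconn.nonempty
      · exact absurd h₀ (hv _)
      have hcover := isVertexCover_singleton_of_subsingleton_edgeSet
        (Subdiv.subsingleton_edgeSet_of_connected hconn hT hv) he (Sym2.mem_mk_left p q)
      refine ⟨{p}, by simpa using hk, fun a b hab ↦ by simpa using hcover hab, ?_⟩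
      rw [Finset.coe_singleton]
      exact .of_subsingleton

/-- `G` has a connected vertex cover of size at most `k` if and only if its subdivision `G'`
has a set `X'` containing all subdivision vertices, of size at most `|E| + k`, inducing a
connected subgraph (i.e. a Steiner tree instance with the subdivision vertices as
terminals). -/
theorem cvc_iff_steiner_subdivision {V : Type} [Fintype V] [DecidableEq V]
    (G : SimpleGraph V) (hconn : G.Connected) (hE : G.edgeSet.Nonempty)
    (k : ℕ) (hk : 1 ≤ k) :
    (∃ X : Finset V, X.card ≤ k ∧ (∀ u v, G.Adj u v → u ∈ X ∨ v ∈ X) ∧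
      (G.induce (X : Set V)).Connected) ↔
    (∃ X' : Finset (V ⊕ G.edgeSet), (∀ e : G.edgeSet, Sum.inr e ∈ X') ∧
      X'.card ≤ Nat.card G.edgeSet + k ∧
      ((Subdiv G).induce (X' : Set (V ⊕ G.edgeSet))).Connected) :=
  cvc_iff_steiner_subdivision_general G k hk
end
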